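/- A directed graph on a finite set has no directed cycle if and only if there is no nonempty subset X of its vertices such that every vertex in X has exactly one in-neighbor in X and exactly one out-neighbor in X. -/

import Mathlib

/-- `R` has a directed cycle: a nonempty sequence `v_0, …, v_k` (indices mod `k+1`)
with `R (v i) (v (i+1))` for all `i` (the successor taken cyclically in `Fin (k+1)`). -/
def HasDirectedCycle {V : Type*} (R : V → V → Prop) : Prop :=
  ∃ (k : ℕ) (v : Fin (k + 1) → V), ∀ i, R (v i) (v (i + 1))

/-!
A cycle of minimal length has no chords: an edge `v a → v b` with `b ≠ a + 1` would close the
arc from `v b` to `v a` into a shorter cycle. Hence on the vertex set of such a cycle every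
vertex has exactly one in- and one out-neighbour. Conversely, if every vertex of a finite
nonempty `X` has an out-neighbour in `X`, following out-neighbours must revisit a vertex, and
the walk between the two visits is a cycle.
-/

section

variable {V : Type*} {R : V → V → Prop}

lemma exists_cycle_of_back_edge {u : ℕ → V} (hu : ∀ i, R (u i) (u (i + 1))) {c : ℕ}
    (h : R (u c) (u 0)) : ∃ v : Fin (c + 1) → V, ∀ j, R (v j) (v (j + 1)) := by
  refine ⟨fun j => u j, fun j => ?_⟩
  simp only [Fin.val_add_one]
  split_ifs with hj
  · simpa [hj] using h
  · exact hu j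

lemma hasDirectedCycle_of_forall_exists_rel {X : Finset V} (hX : X.Nonempty)
    (h : ∀ x ∈ X, ∃ y ∈ X, R x y) : HasDirectedCycle R := by
  obtain ⟨x₀, hx₀⟩ := hX
  choose! g hgX hgR using h
  have hmem (i : ℕ) : g^[i] x₀ ∈ X := Set.MapsTo.iterate (fun x hx => hgX x hx) i hx₀
  obtain ⟨m, n, hmn, heq⟩ := X.finite_toSet.exists_lt_map_eq_of_forall_mem hmem
  obtain ⟨c, rfl⟩ : ∃ c, n = m + c + 1 := ⟨n - m - 1, by omega⟩
  have hwalk (i : ℕ) : R (g^[m + i] x₀) (g^[m + (i + 1)] x₀) := by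
    rw [← add_assoc, Function.iterate_succ_apply']
    exact hgR _ (hmem _)
  have hback : R (g^[m + c] x₀) (g^[m + 0] x₀) := by
    rw [add_zero, heq, Function.iterate_succ_apply']
    exact hgR _ (hmem _)
  exact ⟨c, exists_cycle_of_back_edge hwalk hback⟩

open Fin.NatCast Fin.CommRing in
lemma eq_add_one_of_rel_of_minimal {k : ℕ} {v : Fin (k + 1) → V} (hv : ∀ i, R (v i) (v (i + 1)))
    (hmin : ∀ m, (∃ w : Fin (m + 1) → V, ∀ j, R (w j) (w (j + 1))) → k ≤ m)
    {a b : Fin (k + 1)} (hab : R (v a) (v b)) : b = a + 1 := by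
  have hk : k ≤ (a - b).val := by
    refine hmin _ (exists_cycle_of_back_edge (u := fun i => v (b + i)) (fun i => ?_) ?_)
    · simpa [Nat.cast_succ, add_assoc] using hv (b + i)
    · simpa using hab
  have hlast : a - b = Fin.last k := Fin.ext (le_antisymm (Fin.is_le _) hk)
  have := Fin.last_add_one k
  rw [← hlast] at this
  linear_combination -this

open Fin.CommRing in
lemma exists_in_out_degree_one_of_minimal {k : ℕ} {v : Fin (k + 1) → V}
    (hv : ∀ i, R (v i) (v (i + 1)))
    (hmin : ∀ m, (∃ w : Fin (m + 1) → V, ∀ j, R (w j) (w (j + 1))) → k ≤ m) :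
    ∃ X : Finset V, X.Nonempty ∧ ∀ x ∈ X,
      (∃! y, y ∈ X ∧ R y x) ∧ (∃! z, z ∈ X ∧ R x z) := by
  classical
  refine ⟨Finset.univ.image v, Finset.univ_nonempty.image v, ?_⟩
  simp only [Finset.mem_image, Finset.mem_univ, true_and, forall_exists_index,
    forall_apply_eq_imp_iff]
  intro i
  constructor
  · refine ⟨v (i - 1), ⟨⟨_, rfl⟩, by simpa using hv (i - 1)⟩, ?_⟩
    rintro _ ⟨⟨j, rfl⟩, hji⟩
    rw [eq_add_one_of_rel_of_minimal hv hmin hji, add_sub_cancel_right]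
  · refine ⟨v (i + 1), ⟨⟨_, rfl⟩, hv i⟩, ?_⟩
    rintro _ ⟨⟨j, rfl⟩, hij⟩
    rw [eq_add_one_of_rel_of_minimal hv hmin hij]

end

theorem acyclic_iff_no_in_out_degree_one_subset_general {V : Type*}
    (R : V → V → Prop) :
    ¬ HasDirectedCycle R ↔
      ¬ ∃ X : Finset V, X.Nonempty ∧ ∀ x ∈ X,
        (∃! y, y ∈ X ∧ R y x) ∧ (∃! z, z ∈ X ∧ R x z) := by
  rw [not_iff_not]
  constructor
  · intro hcyc
    classical
    obtain ⟨v, hv⟩ := Nat.find_spec hcyc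
    exact exists_in_out_degree_one_of_minimal hv fun _ => Nat.find_min' hcyc
  · rintro ⟨X, hX, hdeg⟩
    exact hasDirectedCycle_of_forall_exists_rel hX fun x hx => (hdeg x hx).2.exists

theorem acyclic_iff_no_in_out_degree_one_subset {V : Type*} [Fintype V]
    (R : V → V → Prop) :
    ¬ HasDirectedCycle R ↔
      ¬ ∃ X : Finset V, X.Nonempty ∧ ∀ x ∈ X,
        (∃! y, y ∈ X ∧ R y x) ∧ (∃! z, z ∈ X ∧ R x z) :=
  acyclic_iff_no_in_out_degree_one_subset_general R
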